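/- arXiv:1307.5186 — 8 statements merged into one kernel-verified Lean document; each statement's English description precedes it below -/
import Mathlib

section
/- Let n ≥ 3 and let λ : ZMod n → {1, -1} ⊆ ℤ encode an oriented cycle. If there is no index i with λ(i) = λ(i+1) = λ(i+2) (i.e., the cycle has no three consecutive arcs in the same direction), then the map h : ZMod n → Fin 3 sending vertex i to its indegree, namely h(i) = (if λ(i-1) = 1 then 1 else 0) + (if λ(i) = -1 then 1 else 0), is a homomorphism into the oriented graph V₃ with vertices {0,1,2} and arcs 0 → 1, 1 → 2, 0 → 2. -/
/-- The transitive tournament V₃ on {0,1,2} with arcs 0→1, 1→2, 0→2. -/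
def V3 (a b : Fin 3) : Prop :=
  (a = 0 ∧ b = 1) ∨ (a = 1 ∧ b = 2) ∨ (a = 0 ∧ b = 2)

theorem stmt_3 (n : ℕ) (hn : 3 ≤ n) (lam : ZMod n → ℤ)
    (hlam : ∀ i, lam i = 1 ∨ lam i = -1)
    (hno3 : ¬ ∃ i : ZMod n, lam i = lam (i + 1) ∧ lam (i + 1) = lam (i + 2)) :
    ∀ i : ZMod n,
      (lam i = 1 →
        V3 ((if lam (i - 1) = 1 then 1 else 0) + (if lam i = -1 then 1 else 0))
           ((if lam i = 1 then 1 else 0) + (if lam (i + 1) = -1 then 1 else 0))) ∧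
      (lam i = -1 →
        V3 ((if lam i = 1 then 1 else 0) + (if lam (i + 1) = -1 then 1 else 0))
           ((if lam (i - 1) = 1 then 1 else 0) + (if lam i = -1 then 1 else 0))) := by
  intro i
  have hnt := fun a b => hno3 ⟨i - 1, by simpa [sub_add_cancel] using And.intro a b⟩
  have e1 : i - 1 + 1 = i := by ring
  have e2 : i - 1 + 2 = i + 1 := by ring
  rw [e2] at hnt
  rcases hlam (i - 1) with h1 | h1 <;> rcases hlam i with h2 | h2 <;>
    rcases hlam (i + 1) with h3 | h3 <;>
    simp [h1, h2, h3, V3] at hnt ⊢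
end

section
/- An oriented cycle C of length n ≥ 3, encoded by λ : ZMod n → {1, -1}, admits an oriented 3-coloring (a homomorphism into some oriented graph on 3 vertices) if and only if ∑_i λ(i) ≡ 0 (mod 3) or there is no index i with λ(i) = λ(i+1) = λ(i+2). -/
lemma fin3_mem : ∀ a b c x : Fin 3, a ≠ b → b ≠ c → c ≠ a → (x = a ∨ x = b ∨ x = c) := by decide

lemma cycle_encode (R : Fin 3 → Fin 3 → Prop)
    (hirr : ∀ a, ¬ R a a) (hanti : ∀ a b, R a b → ¬ R b a)
    (a b c : Fin 3) (hab : R a b) (hbc : R b c) (hca : R c a) :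
    ∃ e : Fin 3 → ZMod 3, ∀ x y, R x y → e y = e x + 1 := by
  have nab : a ≠ b := by rintro rfl; exact hirr _ hab
  have nbc : b ≠ c := by rintro rfl; exact hirr _ hbc
  have nca : c ≠ a := by rintro rfl; exact hirr _ hca
  refine ⟨fun x => if x = a then 0 else if x = b then 1 else 2, ?_⟩
  intro x y hxy
  rcases fin3_mem a b c x nab nbc nca with hx | hx | hx <;>
    rcases fin3_mem a b c y nab nbc nca with hy | hy | hy <;>
    rw [hx, hy] at hxy ⊢
  · exact absurd hxy (hirr _)
  · simp [nab, nab.symm, nbc, nbc.symm, nca, nca.symm]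
    try decide
  · exact absurd hca (hanti _ _ hxy)
  · exact absurd hab (hanti _ _ hxy)
  · exact absurd hxy (hirr _)
  · simp [nab, nab.symm, nbc, nbc.symm, nca, nca.symm]
    try decide
  · simp [nab, nab.symm, nbc, nbc.symm, nca, nca.symm]
    try decide
  · exact absurd hbc (hanti _ _ hxy)
  · exact absurd hxy (hirr _)

/-- The oriented cycle on `ZMod n` with orientation `lam` admits an oriented
`k`-coloring: a homomorphism into some oriented graph on `k` vertices. -/
def IsOrientedColorable (n k : ℕ) (lam : ZMod n → ℤ) : Prop :=
  ∃ R : Fin k → Fin k → Prop,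
    (∀ a, ¬ R a a) ∧ (∀ a b, R a b → ¬ R b a) ∧
    ∃ h : ZMod n → Fin k,
      ∀ i : ZMod n, (lam i = 1 → R (h i) (h (i + 1))) ∧ (lam i = -1 → R (h (i + 1)) (h i))

theorem stmt_5 (n : ℕ) (hn : 3 ≤ n) (lam : ZMod n → ℤ)
    (hlam : ∀ i, lam i = 1 ∨ lam i = -1) :
    IsOrientedColorable n 3 lam ↔
      ((((∑ k ∈ Finset.range n, lam (k : ZMod n)) : ℤ) : ZMod 3) = 0 ∨
        ¬ ∃ i : ZMod n, lam i = lam (i + 1) ∧ lam (i + 1) = lam (i + 2)) := by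
  haveI : NeZero n := ⟨by omega⟩
  constructor
  · rintro ⟨R, hirr, hanti, h, hh⟩
    by_cases htrip : ∃ i : ZMod n, lam i = lam (i + 1) ∧ lam (i + 1) = lam (i + 2)
    · left
      obtain ⟨i, ht1, ht2⟩ := htrip
      have e21 : i + 1 + 1 = i + 2 := by ring
      obtain ⟨e, he⟩ : ∃ e : Fin 3 → ZMod 3, ∀ x y, R x y → e y = e x + 1 := by
        rcases hlam i with hli | hli
        · have l1 : lam (i + 1) = 1 := by rw [← ht1]; exact hli
          have l2 : lam (i + 2) = 1 := by rw [← ht2]; exact l1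
          have r1 := (hh i).1 hli
          have r2 := (hh (i + 1)).1 l1
          have r3 := (hh (i + 2)).1 l2
          rw [e21] at r2
          have nab : h i ≠ h (i + 1) := by
            intro q; rw [q] at r1; exact hirr _ r1
          have nbc : h (i + 1) ≠ h (i + 2) := by
            intro q; rw [q] at r2; exact hirr _ r2
          have nca : h (i + 2) ≠ h i := by
            intro q; rw [q] at r2; exact hanti _ _ r1 r2
          have hd : h (i + 2 + 1) = h i := by
            rcases fin3_mem (h i) (h (i + 1)) (h (i + 2)) (h (i + 2 + 1)) nab nbc nca
              with q | q | q
            · exact q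
            · rw [q] at r3; exact absurd r3 (hanti _ _ r2)
            · rw [q] at r3; exact absurd r3 (hirr _)
          rw [hd] at r3
          exact cycle_encode R hirr hanti _ _ _ r1 r2 r3
        · have l1 : lam (i + 1) = -1 := by rw [← ht1]; exact hli
          have l2 : lam (i + 2) = -1 := by rw [← ht2]; exact l1
          have r1 := (hh i).2 hli
          have r2 := (hh (i + 1)).2 l1
          have r3 := (hh (i + 2)).2 l2
          rw [e21] at r2
          have nab : h (i + 2 + 1) ≠ h (i + 2) := by
            intro q; rw [← q] at r3; exact hirr _ r3
          have nbc : h (i + 2) ≠ h (i + 1) := by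
            intro q; rw [← q] at r2; exact hirr _ r2
          have nca : h (i + 1) ≠ h (i + 2 + 1) := by
            intro q; rw [q] at r2; exact hanti _ _ r2 r3
          have hd : h i = h (i + 2 + 1) := by
            rcases fin3_mem (h (i + 2 + 1)) (h (i + 2)) (h (i + 1)) (h i) nab nbc nca
              with q | q | q
            · exact q
            · rw [q] at r1; exact absurd r1 (hanti _ _ r2)
            · rw [q] at r1; exact absurd r1 (hirr _)
          rw [hd] at r1
          exact cycle_encode R hirr hanti _ _ _ r3 r2 r1
      have step : ∀ j : ZMod n, e (h (j + 1)) = e (h j) + ((lam j : ℤ) : ZMod 3) := by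
        intro j
        rcases hlam j with hj | hj
        · rw [hj]; push_cast
          exact he _ _ ((hh j).1 hj)
        · rw [hj]; push_cast
          have hq := he _ _ ((hh j).2 hj)
          rw [eq_sub_of_add_eq hq.symm]
          ring
      have tele : ∀ m : ℕ, e (h ((m : ZMod n))) =
          e (h 0) + ((∑ k ∈ Finset.range m, lam ((k : ℕ) : ZMod n) : ℤ) : ZMod 3) := by
        intro m
        induction m with
        | zero => simp
        | succ m ih =>
          have hcast : ((m + 1 : ℕ) : ZMod n) = ((m : ℕ) : ZMod n) + 1 := by push_cast; ring
          rw [hcast, step, ih, Finset.sum_range_succ]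
          push_cast
          ring
      have hfin := tele n
      rw [ZMod.natCast_self] at hfin
      exact left_eq_add.mp hfin
    · right; exact htrip
  · rintro (hsum | htrip)
    · -- map into the directed 3-cycle
      set G : ℕ → ZMod 3 :=
        fun m => ((∑ k ∈ Finset.range m, lam ((k : ℕ) : ZMod n) : ℤ) : ZMod 3) with hGdef
      have hGsucc : ∀ m : ℕ, G (m + 1) = G m + ((lam ((m : ℕ) : ZMod n) : ℤ) : ZMod 3) := by
        intro m; simp only [hGdef, Finset.sum_range_succ]; push_cast; ring
      have hGn : G n = 0 := hsum
      have key : ∀ i : ZMod n, G ((i + 1).val) = G i.val + ((lam i : ℤ) : ZMod 3) := by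
        intro i
        have hv : i.val < n := ZMod.val_lt i
        have hi : ((i.val : ℕ) : ZMod n) = i := ZMod.natCast_rightInverse i
        have h1 : (i + 1 : ZMod n) = ((i.val + 1 : ℕ) : ZMod n) := by push_cast; rw [hi]
        rcases Nat.lt_or_ge (i.val + 1) n with hlt | hge
        · have hval : (i + 1).val = i.val + 1 := by
            rw [h1, ZMod.val_natCast, Nat.mod_eq_of_lt hlt]
          rw [hval, hGsucc, hi]
        · have hn' : i.val + 1 = n := by omega
          have hval : (i + 1).val = 0 := by
            rw [h1, ZMod.val_natCast, hn', Nat.mod_self]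
          have hthis : G (i.val + 1) = G i.val + ((lam i : ℤ) : ZMod 3) := by rw [hGsucc, hi]
          rw [hn', hGn] at hthis
          have hG0 : G 0 = 0 := by simp [hGdef]
          rw [hval, hG0]
          exact hthis
      refine ⟨fun a b => ((b : ℕ) : ZMod 3) = ((a : ℕ) : ZMod 3) + 1, by decide, by decide, ?_⟩
      refine ⟨fun i => ⟨(G i.val).val, ZMod.val_lt _⟩, ?_⟩
      intro i
      have hc : ∀ m : ℕ, (((⟨(G m).val, ZMod.val_lt _⟩ : Fin 3) : ℕ) : ZMod 3) = G m :=
        fun m => ZMod.natCast_rightInverse (G m)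
      constructor <;> intro hli
      · show (((G ((i + 1).val)).val : ℕ) : ZMod 3) = (((G i.val).val : ℕ) : ZMod 3) + 1
        rw [hc, hc, key i, hli]
        push_cast
        ring
      · show (((G i.val).val : ℕ) : ZMod 3) = (((G ((i + 1).val)).val : ℕ) : ZMod 3) + 1
        rw [hc, hc, key i, hli]
        push_cast
        ring
    · -- map into the transitive tournament
      have notrip : ∀ j : ZMod n, ¬(lam j = lam (j + 1) ∧ lam (j + 1) = lam (j + 2)) :=
        fun j hj => htrip ⟨j, hj⟩
      refine ⟨fun a b => a < b, fun a => lt_irrefl a,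
        fun a b hab hba => absurd hba (not_lt.2 hab.le), ?_⟩
      refine ⟨fun i => if lam (i - 1) = -1 ∧ lam i = 1 then 0
        else if lam (i - 1) = 1 ∧ lam i = -1 then 2 else 1, ?_⟩
      intro i
      have e1 : i + 1 - 1 = i := by ring
      have e2 : i - 1 + 1 = i := by ring
      have e3 : i - 1 + 2 = i + 1 := by ring
      constructor <;> intro hli <;>
        rcases hlam (i - 1) with hp | hp <;> rcases hlam (i + 1) with hq | hq
      · exact absurd ⟨by rw [e2, hp, hli], by rw [e2, e3, hli, hq]⟩ (notrip (i - 1))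
      · simp [e1, hp, hq, hli]
      · simp [e1, hp, hq, hli]
      · simp [e1, hp, hq, hli]
      · simp [e1, hp, hq, hli]
      · simp [e1, hp, hq, hli]
      · simp [e1, hp, hq, hli]
      · exact absurd ⟨by rw [e2, hp, hli], by rw [e2, e3, hli, hq]⟩ (notrip (i - 1))
end

section
/- For every n ≥ 3 with n ≠ 5, the directed n-cycle (vertices ZMod n, all arcs i → i+1) admits a homomorphism into an oriented graph on 4 vertices; specifically, for n ≥ 6, writing n = 3a + 4b with a, b ≥ 0, it maps into the oriented graph on {0,1,2,3} with arcs 0→1, 1→2, 2→3, 3→0, 2→0. -/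
/-- The oriented graph H₄ on {0,1,2,3} with arcs 0→1, 1→2, 2→3, 3→0, 2→0. -/
def H4 (a b : Fin 4) : Prop :=
  (a = 0 ∧ b = 1) ∨ (a = 1 ∧ b = 2) ∨ (a = 2 ∧ b = 3) ∨ (a = 3 ∧ b = 0) ∨ (a = 2 ∧ b = 0)

/-- Walk function: `a` copies of 0,1,2 then copies of 0,1,2,3. -/
def walkF (a k : ℕ) : Fin 4 :=
  if k < 3 * a then ⟨k % 3, by omega⟩ else ⟨(k - 3 * a) % 4, by omega⟩

lemma walkF_step (a b n k : ℕ) (hn : n = 3 * a + 4 * b) (hk : k < n) :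
    H4 (walkF a k) (walkF a ((k + 1) % n)) := by
  subst hn
  rcases eq_or_lt_of_le (Nat.succ_le_of_lt hk) with h | h
  · rw [Nat.succ_eq_add_one] at h
    rw [h, Nat.mod_self]
    clear hk
    simp only [walkF, H4]
    split_ifs <;> simp [Fin.ext_iff, show ((3:Fin 4):ℕ) = 3 from rfl] <;> omega
  · rw [Nat.mod_eq_of_lt h]
    simp only [walkF, H4]
    split_ifs <;> simp [Fin.ext_iff, show ((3:Fin 4):ℕ) = 3 from rfl] <;> omega

theorem stmt_9 (n : ℕ) (hn : 3 ≤ n) (hn5 : n ≠ 5) :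
    (∃ R : Fin 4 → Fin 4 → Prop,
      (∀ a, ¬ R a a) ∧ (∀ a b, R a b → ¬ R b a) ∧
      ∃ h : ZMod n → Fin 4, ∀ i : ZMod n, R (h i) (h (i + 1))) ∧
    (6 ≤ n → ∃ h : ZMod n → Fin 4, ∀ i : ZMod n, H4 (h i) (h (i + 1))) := by
  obtain ⟨a, b, hab⟩ : ∃ a b : ℕ, n = 3 * a + 4 * b := by
    rcases h : n % 3 with _ | _ | _ | k
    · exact ⟨n / 3, 0, by omega⟩
    · exact ⟨(n - 4) / 3, 1, by omega⟩
    · exact ⟨(n - 8) / 3, 2, by omega⟩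
    · omega
  haveI : NeZero n := ⟨by omega⟩
  haveI : Fact (1 < n) := ⟨by omega⟩
  have key : ∃ h : ZMod n → Fin 4, ∀ i : ZMod n, H4 (h i) (h (i + 1)) := by
    refine ⟨fun i => walkF a i.val, fun i => ?_⟩
    have h1 : (i + 1).val = (i.val + 1) % n := by
      rw [ZMod.val_add, ZMod.val_one]
    simp only [h1]
    exact walkF_step a b n i.val hab (ZMod.val_lt i)
  refine ⟨⟨H4, ?_, ?_, key⟩, fun _ => key⟩
  · intro x
    fin_cases x <;> simp [H4]
  · intro x y hxy
    fin_cases x <;> fin_cases y <;> simp_all [H4]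
end

section
/- Let n ≥ 3 and let λ : ZMod n → {1, -1} encode an oriented cycle that is not a directed cycle (i.e., λ is not constant). Then the cycle admits an oriented 4-coloring. Concretely, if λ(n-1) = -1 and λ(i) records the orientation of the remaining arcs, one may color vertex n-1 with a fourth color 3 and color vertices 0, …, n-2 with colors in {0,1,2} via partial sums of λ mod 3, yielding a homomorphism into an oriented graph on 4 vertices. -/
theorem stmt_10 (n : ℕ) (hn : 3 ≤ n) (lam : ZMod n → ℤ)
    (hlam : ∀ i, lam i = 1 ∨ lam i = -1)
    (hnotconst : ∃ i j : ZMod n, lam i ≠ lam j) :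
    IsOrientedColorable n 4 lam := by
  haveI : NeZero n := ⟨by omega⟩
  haveI : Fact (1 < n) := ⟨by omega⟩
  have hval : ∀ x : ZMod n, ((x.val : ZMod n)) = x := fun x => by
    simp [ZMod.natCast_val, ZMod.cast_id]
  have hval3 : ∀ x : ZMod 3, ((x.val : ZMod 3)) = x := fun x => by
    simp [ZMod.natCast_val, ZMod.cast_id]
  have hone : (1 : ZMod n) ≠ 0 := by
    intro h
    have := congrArg ZMod.val h
    rw [ZMod.val_one, ZMod.val_zero] at this
    omega
  have hcastm1 : ((n - 1 : ℕ) : ZMod n) = -1 := by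
    have h1 : (1:ℕ) ≤ n := by omega
    push_cast [Nat.cast_sub h1]
    simp
  -- find a sink position w : lam (w-1) = 1, lam w = -1
  obtain ⟨w, hw1, hw2⟩ : ∃ w : ZMod n, lam (w - 1) = 1 ∧ lam w = -1 := by
    by_contra hc
    push_neg at hc
    have hall : ∀ w : ZMod n, lam (w - 1) = 1 → lam w = 1 := by
      intro w hw
      rcases hlam w with h | h
      · exact h
      · exact absurd h (hc w hw)
    obtain ⟨i0, j0, hne⟩ := hnotconst
    obtain ⟨a, ha, b, hb⟩ : ∃ a, lam a = 1 ∧ ∃ b, lam b = -1 := by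
      rcases hlam i0 with h1 | h1 <;> rcases hlam j0 with h2 | h2
      · exact absurd (h1.trans h2.symm) hne
      · exact ⟨i0, h1, j0, h2⟩
      · exact ⟨j0, h2, i0, h1⟩
      · exact absurd (h1.trans h2.symm) hne
    have key : ∀ k : ℕ, lam (a + k) = 1 := by
      intro k
      induction k with
      | zero => simpa using ha
      | succ k ih =>
        have h1 : lam ((a + k + 1) - 1) = 1 := by simpa using ih
        have h2 := hall _ h1
        have h3 : (((k : ℕ) + 1 : ℕ) : ZMod n) = (k : ZMod n) + 1 := by push_cast; ring
        rw [h3, ← add_assoc]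
        exact h2
    have hb1 : lam b = 1 := by
      have := key ((b - a).val)
      rw [hval] at this
      have he : a + (b - a) = b := by ring
      rwa [he] at this
    rw [hb] at hb1
    norm_num at hb1
  -- partial sums mod 3
  set S : ℕ → ZMod 3 := fun k => ((∑ i ∈ Finset.range k, lam (w + 1 + i) : ℤ) : ZMod 3) with hS
  have hS0 : S 0 = 0 := by simp [hS]
  have hSsucc : ∀ k : ℕ, S (k + 1) = S k + ((lam (w + 1 + k) : ℤ) : ZMod 3) := by
    intro k
    simp [hS, Finset.sum_range_succ]
  -- embedding of ZMod 3 into Fin 4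
  set e : ZMod 3 → Fin 4 := fun a => ⟨a.val, by have := ZMod.val_lt a; omega⟩ with he
  have heval : ∀ x : ZMod 3, (e x).val = x.val := fun x => rfl
  have helt : ∀ x : ZMod 3, (e x).val < 3 := fun x => ZMod.val_lt x
  -- the relation
  refine ⟨fun a b =>
    (a.val < 3 ∧ b.val < 3 ∧ (b.val : ZMod 3) = (a.val : ZMod 3) + 1) ∨
    (b = 3 ∧ (a = e (S (n - 2)) ∨ a = e 0)), ?_, ?_, ?_⟩
  · rintro a (⟨h1, h2, h3⟩ | ⟨rfl, h4 | h4⟩)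
    · rw [left_eq_add] at h3
      exact one_ne_zero h3
    · have h7 := helt (S (n - 2)); rw [← h4] at h7; exact absurd h7 (by decide)
    · have h7 := helt 0; rw [← h4] at h7; exact absurd h7 (by decide)
  · rintro a b hab hba
    rcases hab with ⟨h1, h2, h3⟩ | ⟨rfl, h4⟩
    · rcases hba with ⟨h1', h2', h3'⟩ | ⟨h5, h6⟩
      · rw [h3, add_assoc] at h3'
        have h7 := left_eq_add.mp h3'
        revert h7; decide
      · rw [h5] at h1; exact absurd h1 (by decide)
    · rcases hba with ⟨h1', h2', h3'⟩ | ⟨h5, h6⟩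
      · exact absurd h1' (by decide)
      · rcases h6 with h6 | h6
        · have h7 := helt (S (n - 2)); rw [← h6] at h7; exact absurd h7 (by decide)
        · have h7 := helt 0; rw [← h6] at h7; exact absurd h7 (by decide)
  -- the coloring
  · refine ⟨fun x => if x = w then (3 : Fin 4) else e (S ((x - (w + 1)).val)), ?_⟩
    intro i
    have hwne : w + 1 ≠ w := by
      intro h
      have : (1 : ZMod n) = 0 := by
        have := sub_eq_zero.mpr h
        rwa [add_sub_cancel_left] at this
      exact hone this
    by_cases hiw : i = w
    · subst hiw
      constructor
      · intro h1; rw [hw2] at h1; norm_num at h1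
      · intro _
        beta_reduce
        rw [if_pos rfl, if_neg hwne]
        right
        refine ⟨rfl, Or.inr ?_⟩
        congr 1
        rw [show i + 1 - (i + 1) = 0 by ring, ZMod.val_zero, hS0]
    · by_cases hiw1 : i + 1 = w
      · have hi : i = w - 1 := by rw [← hiw1]; ring
        constructor
        · intro _
          beta_reduce
          rw [if_pos hiw1, if_neg hiw]
          right
          refine ⟨rfl, Or.inl ?_⟩
          congr 2
          rw [hi]
          have h2 : w - 1 - (w + 1) = ((n - 2 : ℕ) : ZMod n) := by
            push_cast [Nat.cast_sub (show 2 ≤ n by omega)]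
            simp
            ring
          rw [h2, ZMod.val_cast_of_lt (by omega)]
        · intro h1
          rw [hi, hw1] at h1
          norm_num at h1
      · -- generic arc
        have hx : i - (w + 1) ≠ -1 := by
          intro h
          apply hiw
          have : i = -1 + (w + 1) := by rw [← h]; ring
          rw [this]; ring
        have hxval : (i - (w + 1)).val ≠ n - 1 := by
          intro h
          apply hx
          have := hval (i - (w + 1))
          rw [h, hcastm1] at this
          exact this.symm
        have hk : ((i + 1) - (w + 1)).val = (i - (w + 1)).val + 1 := by
          have h1 : (i + 1) - (w + 1) = (i - (w + 1)) + 1 := by ring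
          rw [h1, ZMod.val_add, ZMod.val_one]
          have h2 := ZMod.val_lt (i - (w + 1))
          rw [Nat.mod_eq_of_lt (by omega)]
        have hlami : w + 1 + (((i - (w + 1)).val : ℕ) : ZMod n) = i := by
          rw [hval]; ring
        have hstep : S ((i + 1) - (w + 1)).val = S ((i - (w + 1)).val) + ((lam i : ℤ) : ZMod 3) := by
          rw [hk, hSsucc, hlami]
        beta_reduce
        rw [if_neg hiw, if_neg hiw1]
        constructor
        · intro h1
          rw [h1] at hstep
          left
          refine ⟨helt _, helt _, ?_⟩
          rw [heval, heval, hval3, hval3, hstep]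
          push_cast
          ring
        · intro h1
          rw [h1] at hstep
          left
          refine ⟨helt _, helt _, ?_⟩
          rw [heval, heval, hval3, hval3, hstep]
          push_cast
          ring
end

section
/- An oriented cycle of length n ≥ 3 encoded by λ : ZMod n → {1, -1} admits an oriented 2-coloring if and only if its orientation is alternating, i.e., λ(i+1) = -λ(i) for all i (which forces n to be even). -/
theorem stmt_11 (n : ℕ) (hn : 3 ≤ n) (lam : ZMod n → ℤ)
    (hlam : ∀ i, lam i = 1 ∨ lam i = -1) :
    IsOrientedColorable n 2 lam ↔ ∀ i : ZMod n, lam (i + 1) = -lam i := by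
  constructor
  · rintro ⟨R, hirr, hasym, h, hh⟩ i
    have key : ∀ a b c : Fin 2, a ≠ b → c ≠ b → a = c := by decide
    rcases hlam i with h1 | h1 <;> rcases hlam (i + 1) with h2 | h2
    · exfalso
      have r1 := (hh i).1 h1
      have r2 := (hh (i + 1)).1 h2
      have e : h i = h (i + 1 + 1) :=
        key _ _ _ (fun e => hirr _ (e ▸ r1)) (fun e => hirr _ (e ▸ r2))
      exact hasym _ _ r1 (e.symm ▸ r2)
    · rw [h1, h2]
    · rw [h1, h2]; ring
    · exfalso
      have r1 := (hh i).2 h1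
      have r2 := (hh (i + 1)).2 h2
      have e : h i = h (i + 1 + 1) :=
        key _ _ _ (fun e => hirr _ (e ▸ r1)) (fun e => hirr _ (e ▸ r2))
      exact hasym _ _ r2 (e ▸ r1)
  · intro halt
    refine ⟨fun a b => a = 0 ∧ b = 1, by decide, by decide,
      fun i => if lam i = 1 then 0 else 1, fun i => ⟨fun h1 => ?_, fun h1 => ?_⟩⟩
    · have h2 : lam (i + 1) = -1 := by rw [halt i, h1]
      simp only [h1, h2, if_pos rfl]
      norm_num
    · have h2 : lam (i + 1) = 1 := by rw [halt i, h1]; ring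
      simp only [h1, h2, if_pos rfl]
      norm_num
end

section
/- Let n ≥ 3, λ : ZMod n → {1, -1}, and suppose there exists i with λ(i) = λ(i+1) = λ(i+2) and ∑_j λ(j) ≢ 0 (mod 3). Then the oriented cycle encoded by λ admits no oriented 3-coloring: there is no homomorphism into any oriented graph on 3 vertices. -/
/-- A directed path of three arcs in an irreflexive antisymmetric relation on 3 vertices
forces a directed triangle, giving a "potential" into `ZMod 3`. -/
lemma key_triangle (R : Fin 3 → Fin 3 → Prop) (hirr : ∀ a, ¬ R a a)
    (hanti : ∀ a b, R a b → ¬ R b a) (a b c d : Fin 3)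
    (hab : R a b) (hbc : R b c) (hcd : R c d) :
    ∃ f : Fin 3 → ZMod 3, ∀ x y, R x y → f y = f x + 1 := by
  have hne : ∀ x y : Fin 3, R x y → x ≠ y := by
    intro x y hxy h; subst h; exact hirr _ hxy
  have hab' : a ≠ b := hne _ _ hab
  have hbc' : b ≠ c := hne _ _ hbc
  have hac' : a ≠ c := by
    intro h; subst h; exact hanti _ _ hab hbc
  have hdb : d ≠ b := by
    intro h; subst h; exact hanti _ _ hbc hcd
  have hdc : d ≠ c := (hne _ _ hcd).symm
  have tri : ∀ a b c x : Fin 3, a ≠ b → b ≠ c → a ≠ c → x = a ∨ x = b ∨ x = c := by decide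
  have hda : d = a := by
    rcases tri a b c d hab' hbc' hac' with h | h | h
    · exact h
    · exact absurd h hdb
    · exact absurd h hdc
  rw [hda] at hcd
  have hca : R c a := hcd
  refine ⟨fun x => if x = a then 0 else if x = b then 1 else 2, ?_⟩
  intro x y hxy
  rcases tri a b c x hab' hbc' hac' with hx | hx | hx <;>
    rcases tri a b c y hab' hbc' hac' with hy | hy | hy <;> subst hx <;> subst hy
  · exact absurd hxy (hirr _)
  · simp [hab'.symm]
  · exact absurd hxy (fun h => hanti _ _ h hca)
  · exact absurd hxy (fun h => hanti _ _ hab h)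
  · exact absurd hxy (hirr _)
  · simp [hbc'.symm, hab'.symm, hac'.symm]; decide
  · simp [hac'.symm, hbc'.symm, hab'.symm]; decide
  · exact absurd hxy (fun h => hanti _ _ hbc h)
  · exact absurd hxy (hirr _)

theorem stmt_13 (n : ℕ) (hn : 3 ≤ n) (lam : ZMod n → ℤ)
    (hlam : ∀ i, lam i = 1 ∨ lam i = -1)
    (hthree : ∃ i : ZMod n, lam i = lam (i + 1) ∧ lam (i + 1) = lam (i + 2))
    (hsum : (((∑ k ∈ Finset.range n, lam (k : ZMod n)) : ℤ) : ZMod 3) ≠ 0) :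
    ¬ IsOrientedColorable n 3 lam := by
  rintro ⟨R, hirr, hanti, h, hh⟩
  obtain ⟨i, h1, h2⟩ := hthree
  -- get the potential f
  obtain ⟨f, hf⟩ : ∃ f : Fin 3 → ZMod 3, ∀ x y, R x y → f y = f x + 1 := by
    rcases hlam i with hi | hi
    · have e1 := (hh i).1 hi
      have e2 := (hh (i + 1)).1 (h1 ▸ hi)
      have e3 := (hh (i + 2)).1 (h2 ▸ h1 ▸ hi)
      rw [show i + 1 + 1 = i + 2 from by ring] at e2
      exact key_triangle R hirr hanti _ _ _ _ e1 e2 e3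
    · have e1 := (hh i).2 hi
      have e2 := (hh (i + 1)).2 (h1 ▸ hi)
      have e3 := (hh (i + 2)).2 (h2 ▸ h1 ▸ hi)
      rw [show i + 1 + 1 = i + 2 from by ring] at e2
      exact key_triangle R hirr hanti _ _ _ _ e3 e2 e1
  set g : ZMod n → ZMod 3 := fun j => f (h j) with hg
  have step : ∀ j : ZMod n, g (j + 1) = g j + ((lam j : ℤ) : ZMod 3) := by
    intro j
    rcases hlam j with hj | hj
    · rw [hj]; exact_mod_cast hf _ _ ((hh j).1 hj)
    · have := hf _ _ ((hh j).2 hj)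
      rw [hj]; push_cast
      simp only [hg] at this ⊢
      rw [this]; ring
  have tel : ∀ m : ℕ, g (m : ZMod n) =
      g 0 + ∑ k ∈ Finset.range m, ((lam (k : ZMod n) : ℤ) : ZMod 3) := by
    intro m
    induction m with
    | zero => simp
    | succ m ih =>
      rw [Finset.sum_range_succ, Nat.cast_succ, step, ih]
      ring
  have := tel n
  have hNeZero : NeZero n := ⟨by omega⟩
  rw [ZMod.natCast_self] at this
  have hS : (∑ k ∈ Finset.range n, ((lam (k : ZMod n) : ℤ) : ZMod 3)) = 0 :=
    left_eq_add.mp this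
  apply hsum
  push_cast
  exact hS
end

section
/- The oriented chromatic number of an oriented cycle C of length n ≥ 3 encoded by λ : ZMod n → {1, -1} satisfies: χₒ(C) = 2 iff λ is alternating; χₒ(C) = 3 iff λ is not alternating and (∑λ ≡ 0 mod 3 or no three consecutive arcs share a direction); χₒ(C) = 5 iff C is the directed 5-cycle; χₒ(C) = 4 in all remaining cases. -/
/-- The oriented chromatic number of the oriented cycle encoded by `lam`. -/
noncomputable def orientedChromaticNumber (n : ℕ) (lam : ZMod n → ℤ) : ℕ :=
  sInf {k | IsOrientedColorable n k lam}

section basic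
variable {n : ℕ} {lam : ZMod n → ℤ}

lemma colorable_succ {k : ℕ} (h : IsOrientedColorable n k lam) :
    IsOrientedColorable n (k+1) lam := by
  obtain ⟨R, hirr, hanti, h, hh⟩ := h
  refine ⟨fun a b => ∃ (ha : a.val < k) (hb : b.val < k), R ⟨a.val, ha⟩ ⟨b.val, hb⟩,
    ?_, ?_, Fin.castSucc ∘ h, ?_⟩
  · rintro a ⟨ha, hb, hr⟩; exact hirr _ hr
  · rintro a b ⟨ha, hb, hr⟩ ⟨hb', ha', hr'⟩
    exact hanti _ _ hr (by convert hr' using 2 <;> exact rfl)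
  · intro i
    refine ⟨fun h1 => ?_, fun h1 => ?_⟩
    · exact ⟨(h i).isLt, (h (i+1)).isLt, by simpa using (hh i).1 h1⟩
    · exact ⟨(h (i+1)).isLt, (h i).isLt, by simpa using (hh i).2 h1⟩

lemma colorable_mono {k m : ℕ} (hkm : k ≤ m) (h : IsOrientedColorable n k lam) :
    IsOrientedColorable n m lam := by
  induction hkm with
  | refl => exact h
  | step _ ih => exact colorable_succ ih

lemma not_colorable_zero (hn : 3 ≤ n) : ¬ IsOrientedColorable n 0 lam := by
  rintro ⟨R, _, _, h, _⟩
  haveI : NeZero n := ⟨by omega⟩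
  exact (h 0).elim0

lemma not_colorable_one (hn : 3 ≤ n) (hlam : ∀ i, lam i = 1 ∨ lam i = -1) :
    ¬ IsOrientedColorable n 1 lam := by
  rintro ⟨R, hirr, _, h, hh⟩
  haveI : NeZero n := ⟨by omega⟩
  have h1 : h 0 = h (0+1) := Subsingleton.elim _ _
  rcases hlam 0 with h0 | h0
  · exact hirr _ (h1 ▸ (hh 0).1 h0)
  · exact hirr _ (h1 ▸ (hh 0).2 h0)

end basic

section cyc
variable {n : ℕ} {lam : ZMod n → ℤ}

def toF (n : ℕ) [NeZero n] (i : ZMod n) : Fin n := ⟨i.val, ZMod.val_lt i⟩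

lemma toF_inj [NeZero n] : Function.Injective (toF n) := by
  intro i j hij
  exact ZMod.val_injective n (congrArg Fin.val hij)

lemma myTwoNe (hn : 3 ≤ n) : (2 : ZMod n) ≠ 0 := by
  haveI : NeZero n := ⟨by omega⟩
  intro h
  have h2 : ((2:ℕ) : ZMod n) = 0 := by exact_mod_cast h
  rw [ZMod.natCast_eq_zero_iff] at h2
  exact absurd (Nat.le_of_dvd (by norm_num) h2) (by omega)

lemma myOneNe (hn : 3 ≤ n) : (1 : ZMod n) ≠ 0 := by
  haveI : NeZero n := ⟨by omega⟩
  intro h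
  have h2 : ((1:ℕ) : ZMod n) = 0 := by exact_mod_cast h
  rw [ZMod.natCast_eq_zero_iff] at h2
  exact absurd (Nat.le_of_dvd (by norm_num) h2) (by omega)

lemma colorable_self (hn : 3 ≤ n) : IsOrientedColorable n n lam := by
  haveI : NeZero n := ⟨by omega⟩
  refine ⟨fun a b => ∃ i : ZMod n,
      (lam i = 1 ∧ a = toF n i ∧ b = toF n (i+1)) ∨
      (lam i = -1 ∧ a = toF n (i+1) ∧ b = toF n i), ?_, ?_, toF n, ?_⟩
  · rintro a ⟨i, ⟨_, rfl, hb⟩ | ⟨_, rfl, hb⟩⟩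
    · exact myOneNe hn (by linear_combination -(toF_inj hb))
    · exact myOneNe hn (by linear_combination toF_inj hb)
  · rintro a b ⟨i, ⟨hi, rfl, rfl⟩ | ⟨hi, rfl, rfl⟩⟩ ⟨j, ⟨hj, hj1, hj2⟩ | ⟨hj, hj1, hj2⟩⟩
    · have e1 := toF_inj hj1; have e2 := toF_inj hj2
      exact myTwoNe hn (by linear_combination e1 - e2)
    · have e2 := toF_inj hj2
      rw [← e2] at hj; rw [hi] at hj; norm_num at hj
    · have e1 := toF_inj hj1
      rw [← e1] at hj; rw [hi] at hj; norm_num at hj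
    · have e1 := toF_inj hj1; have e2 := toF_inj hj2
      exact myTwoNe hn (by linear_combination e2 - e1)
  · intro i
    exact ⟨fun h1 => ⟨i, Or.inl ⟨h1, rfl, rfl⟩⟩, fun h1 => ⟨i, Or.inr ⟨h1, rfl, rfl⟩⟩⟩

end cyc

section two
variable {n : ℕ} {lam : ZMod n → ℤ}

lemma alternating_colorable2 (halt : ∀ i, lam (i+1) = -lam i)
    (hlam : ∀ i, lam i = 1 ∨ lam i = -1) : IsOrientedColorable n 2 lam := by
  refine ⟨fun a b => a = 0 ∧ b = 1, ?_, ?_, fun i => if lam i = 1 then 0 else 1, ?_⟩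
  · rintro a ⟨rfl, h⟩; exact absurd h (by decide)
  · rintro a b ⟨rfl, rfl⟩ ⟨h, _⟩; exact absurd h (by decide)
  · intro i
    constructor
    · intro h1
      have h2 : lam (i+1) = -1 := by rw [halt i, h1]
      simp [h1, h2]
    · intro h1
      have h2 : lam (i+1) = 1 := by rw [halt i, h1]; norm_num
      simp [h1, h2]

lemma alt_of_hom {k : ℕ} {R : Fin k → Fin k → Prop} {x y : Fin k} (hxy : x ≠ y)
    (hkey : ∀ a b, R a b → a = x ∧ b = y) {h : ZMod n → Fin k}
    (hh : ∀ i : ZMod n, (lam i = 1 → R (h i) (h (i + 1))) ∧ (lam i = -1 → R (h (i + 1)) (h i)))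
    (hlam : ∀ i, lam i = 1 ∨ lam i = -1) : ∀ i, lam (i+1) = -lam i := by
  intro i
  rcases hlam i with h1 | h1 <;> rcases hlam (i+1) with h2 | h2
  · exact absurd (((hkey _ _ ((hh (i+1)).1 h2)).1.symm.trans
      (hkey _ _ ((hh i).1 h1)).2) : x = y) hxy
  · simp [h1, h2]
  · simp [h1, h2]
  · exact absurd (((hkey _ _ ((hh i).2 h1)).1.symm.trans
      (hkey _ _ ((hh (i+1)).2 h2)).2) : x = y) hxy

lemma colorable2_alternating (hn : 3 ≤ n) (hlam : ∀ i, lam i = 1 ∨ lam i = -1)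
    (hc : IsOrientedColorable n 2 lam) : ∀ i, lam (i+1) = -lam i := by
  haveI : NeZero n := ⟨by omega⟩
  obtain ⟨R, hirr, hanti, h, hh⟩ := hc
  have harc : ∃ a b : Fin 2, R a b := by
    rcases hlam 0 with h1 | h1
    · exact ⟨_, _, (hh 0).1 h1⟩
    · exact ⟨_, _, (hh 0).2 h1⟩
  obtain ⟨a, b, hab⟩ := harc
  have hxy : a ≠ b := fun e => hirr b (e ▸ hab)
  have hkey : ∀ c d, R c d → c = a ∧ d = b := by
    intro c d hcd
    have hcd' : c ≠ d := fun e => hirr d (e ▸ hcd)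
    have hv : (c.val = a.val ∧ d.val = b.val) ∨ (c.val = b.val ∧ d.val = a.val) := by
      have ha := a.isLt; have hb := b.isLt; have hcl := c.isLt; have hd := d.isLt
      have h1 : a.val ≠ b.val := fun e => hxy (Fin.ext e)
      have h2 : c.val ≠ d.val := fun e => hcd' (Fin.ext e)
      omega
    rcases hv with ⟨e1, e2⟩ | ⟨e1, e2⟩
    · exact ⟨Fin.ext e1, Fin.ext e2⟩
    · have : c = b := Fin.ext e1
      have : d = a := Fin.ext e2
      subst this; subst ‹c = b›
      exact absurd hcd (hanti _ _ hab)
  exact alt_of_hom hxy hkey hh hlam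

end two

section three
variable {n : ℕ} {lam : ZMod n → ℤ}

/-- partial sums of lam, valued in ZMod 3 -/
def gz (n : ℕ) [NeZero n] (lam : ZMod n → ℤ) (i : ZMod n) : ZMod 3 :=
  ((∑ k ∈ Finset.range i.val, lam (k : ZMod n) : ℤ) : ZMod 3)

lemma gz_step [NeZero n] (hsum : (((∑ k ∈ Finset.range n, lam (k : ZMod n)) : ℤ) : ZMod 3) = 0)
    (i : ZMod n) : gz n lam (i + 1) = gz n lam i + ((lam i : ℤ) : ZMod 3) := by
  have hvn := ZMod.val_lt i
  have hi : ((i.val : ℕ) : ZMod n) = i := ZMod.natCast_val i |>.trans (ZMod.cast_id n i)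
  by_cases hc : i.val + 1 < n
  · have hval : (i + 1).val = i.val + 1 := by
      have h2 : i + 1 = ((i.val + 1 : ℕ) : ZMod n) := by rw [Nat.cast_add, Nat.cast_one, hi]
      rw [h2, ZMod.val_cast_of_lt hc]
    rw [gz, gz, hval, Finset.sum_range_succ, hi]
    push_cast
    ring
  · have hval : i.val + 1 = n := by omega
    have hi1 : i + 1 = 0 := by
      rw [← hi, show ((i.val : ℕ) : ZMod n) + 1 = ((i.val + 1 : ℕ) : ZMod n) by push_cast; ring,
        hval, ZMod.natCast_self]
    rw [hi1]
    have h0 : gz n lam 0 = 0 := by simp [gz]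
    rw [h0]
    have hS : (∑ k ∈ Finset.range n, lam (k : ZMod n)) =
        (∑ k ∈ Finset.range i.val, lam (k : ZMod n)) + lam i := by
      rw [show Finset.range n = Finset.range (i.val + 1) from by rw [hval],
        Finset.sum_range_succ, hi]
    rw [hS] at hsum
    simp only [gz]
    push_cast at hsum ⊢
    linear_combination -hsum

lemma sum_colorable3 (hn : 3 ≤ n)
    (hsum : (((∑ k ∈ Finset.range n, lam (k : ZMod n)) : ℤ) : ZMod 3) = 0) :
    IsOrientedColorable n 3 lam := by
  haveI : NeZero n := ⟨by omega⟩
  refine ⟨fun a b => ∃ c : ZMod 3, a = toF 3 c ∧ b = toF 3 (c + 1), ?_, ?_,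
    fun i => toF 3 (gz n lam i), ?_⟩
  · rintro a ⟨c, rfl, hb⟩
    have := toF_inj hb
    have : (1 : ZMod 3) = 0 := by linear_combination -this
    exact absurd this (by decide)
  · rintro a b ⟨c, rfl, rfl⟩ ⟨d, hd1, hd2⟩
    have e1 := toF_inj hd1; have e2 := toF_inj hd2
    have : (2 : ZMod 3) = 0 := by linear_combination e1 - e2
    exact absurd this (by decide)
  · intro i
    constructor
    · intro h1
      refine ⟨gz n lam i, rfl, ?_⟩
      show toF 3 (gz n lam (i+1)) = toF 3 (gz n lam i + 1)
      congr 1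
      rw [gz_step hsum i, h1]
      push_cast; ring
    · intro h1
      refine ⟨gz n lam (i+1), rfl, ?_⟩
      show toF 3 (gz n lam i) = toF 3 (gz n lam (i+1) + 1)
      congr 1
      rw [gz_step hsum i, h1]
      push_cast; ring

end three

section norun
variable {n : ℕ} {lam : ZMod n → ℤ}

def Lv (lam : ZMod n → ℤ) (i : ZMod n) : ℕ :=
  if lam (i-1) = 1 then (if lam (i-2) = 1 then 2 else 1) else 0

def Rv (lam : ZMod n → ℤ) (i : ZMod n) : ℕ :=
  if lam i = -1 then (if lam (i+1) = -1 then 2 else 1) else 0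

def hv (lam : ZMod n → ℤ) (i : ZMod n) : ℕ := max (Lv lam i) (Rv lam i)

lemma hv_le (i : ZMod n) : hv lam i ≤ 2 := by
  unfold hv Lv Rv; split_ifs <;> omega

lemma step_pos (hnr : ∀ i : ZMod n, ¬(lam i = lam (i+1) ∧ lam (i+1) = lam (i+2)))
    (i : ZMod n) (h1 : lam i = 1) : hv lam i < hv lam (i+1) := by
  have e1 : i + 1 - 1 = i := by ring
  have e2 : i + 1 - 2 = i - 1 := by ring
  have e3 : i - 2 + 1 = i - 1 := by ring
  have e4 : i - 2 + 2 = i := by ring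
  have hRv : Rv lam i = 0 := by simp [Rv, h1]
  have hLv1 : Lv lam (i+1) = if lam (i-1) = 1 then 2 else 1 := by
    unfold Lv; rw [e1, e2, if_pos h1]
  have hle := le_max_left (Lv lam (i+1)) (Rv lam (i+1))
  by_cases h2 : lam (i-1) = 1
  · have h3 : lam (i-2) ≠ 1 := by
      intro h4
      exact hnr (i-2) ⟨by rw [e3, e4] at *; rw [h4, h2], by rw [e3, e4] at *; rw [h2, h1]⟩
    have hL : Lv lam i = 1 := by unfold Lv; rw [if_pos h2, if_neg h3]
    rw [if_pos h2] at hLv1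
    unfold hv
    omega
  · have hL : Lv lam i = 0 := by unfold Lv; rw [if_neg h2]
    rw [if_neg h2] at hLv1
    unfold hv
    omega

lemma step_neg (hnr : ∀ i : ZMod n, ¬(lam i = lam (i+1) ∧ lam (i+1) = lam (i+2)))
    (i : ZMod n) (h1 : lam i = -1) : hv lam (i+1) < hv lam i := by
  have e1 : i + 1 - 1 = i := by ring
  have e2 : i + 1 + 1 = i + 2 := by ring
  have hLv1 : Lv lam (i+1) = 0 := by unfold Lv; rw [e1, if_neg (by rw [h1]; norm_num)]
  have hle := le_max_right (Lv lam i) (Rv lam i)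
  by_cases h2 : lam (i+1) = -1
  · have h3 : lam (i+2) ≠ -1 := by
      intro h4
      exact hnr i ⟨by rw [h1, h2], by rw [h2, h4]⟩
    have hR1 : Rv lam (i+1) = 1 := by unfold Rv; rw [if_pos h2, e2, if_neg h3]
    have hR : Rv lam i = 2 := by unfold Rv; rw [if_pos h1, if_pos h2]
    unfold hv
    omega
  · have hR1 : Rv lam (i+1) = 0 := by unfold Rv; rw [if_neg h2]
    have hR : Rv lam i = 1 := by unfold Rv; rw [if_pos h1, if_neg h2]
    unfold hv
    omega

lemma norun_colorable3
    (hnr : ¬ ∃ i : ZMod n, lam i = lam (i+1) ∧ lam (i+1) = lam (i+2)) :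
    IsOrientedColorable n 3 lam := by
  push_neg at hnr
  have hnr' : ∀ i : ZMod n, ¬(lam i = lam (i+1) ∧ lam (i+1) = lam (i+2)) := by
    intro i ⟨a, b⟩; exact hnr i a b
  refine ⟨fun a b => a.val < b.val, fun a => by omega, fun a b h h' => by omega,
    fun i => ⟨hv lam i, by have := hv_le (lam := lam) i; omega⟩, ?_⟩
  intro i
  exact ⟨fun h1 => step_pos hnr' i h1, fun h1 => step_neg hnr' i h1⟩

end norun

section forward3
variable {n : ℕ} {lam : ZMod n → ℤ}

lemma fin3_cover {x y z : Fin 3} (hxy : x ≠ y) (hyz : y ≠ z) (hxz : x ≠ z) :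
    ∀ v : Fin 3, v = x ∨ v = y ∨ v = z := by
  intro v
  have h1 := x.isLt; have h2 := y.isLt; have h3 := z.isLt; have h4 := v.isLt
  have e1 : x.val ≠ y.val := fun e => hxy (Fin.ext e)
  have e2 : y.val ≠ z.val := fun e => hyz (Fin.ext e)
  have e3 : x.val ≠ z.val := fun e => hxz (Fin.ext e)
  have : v.val = x.val ∨ v.val = y.val ∨ v.val = z.val := by omega
  rcases this with h | h | h
  · exact Or.inl (Fin.ext h)
  · exact Or.inr (Or.inl (Fin.ext h))
  · exact Or.inr (Or.inr (Fin.ext h))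

lemma cycle_key {R : Fin 3 → Fin 3 → Prop} (hirr : ∀ a, ¬ R a a)
    (hanti : ∀ a b, R a b → ¬ R b a) {x y z u : Fin 3}
    (hxy : R x y) (hyz : R y z) (hzu : R z u) :
    x ≠ y ∧ y ≠ z ∧ x ≠ z ∧
    ∀ a b, R a b → (a = x ∧ b = y) ∨ (a = y ∧ b = z) ∨ (a = z ∧ b = x) := by
  have d1 : x ≠ y := fun e => hirr y (e ▸ hxy)
  have d2 : y ≠ z := fun e => hirr z (e ▸ hyz)
  have d3 : x ≠ z := by
    intro e; subst e; exact hanti _ _ hxy hyz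
  have hcov := fin3_cover d1 d2 d3
  have hux : u = x := by
    rcases hcov u with h | h | h
    · exact h
    · exact absurd hzu (h ▸ fun hc => hanti _ _ hyz hc)
    · rw [h] at hzu; exact absurd hzu (hirr z)
  subst hux
  refine ⟨d1, d2, d3, ?_⟩
  intro a b hab
  rcases hcov a with rfl | rfl | rfl <;> rcases hcov b with rfl | rfl | rfl
  · exact absurd hab (hirr _)
  · exact Or.inl ⟨rfl, rfl⟩
  · exact absurd hab (fun hc => hanti _ _ hzu hc)
  · exact absurd hab (fun hc => hanti _ _ hxy hc)
  · exact absurd hab (hirr _)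
  · exact Or.inr (Or.inl ⟨rfl, rfl⟩)
  · exact Or.inr (Or.inr ⟨rfl, rfl⟩)
  · exact absurd hab (fun hc => hanti _ _ hyz hc)
  · exact absurd hab (hirr _)

lemma colorable3_run_sum (hn : 3 ≤ n) (hlam : ∀ i, lam i = 1 ∨ lam i = -1)
    (hc : IsOrientedColorable n 3 lam)
    (hrun : ∃ i : ZMod n, lam i = lam (i+1) ∧ lam (i+1) = lam (i+2)) :
    (((∑ k ∈ Finset.range n, lam (k : ZMod n)) : ℤ) : ZMod 3) = 0 := by
  haveI : NeZero n := ⟨by omega⟩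
  classical
  obtain ⟨R, hirr, hanti, h, hh⟩ := hc
  obtain ⟨i, hr1, hr2⟩ := hrun
  have e23 : i + 2 + 1 = i + 3 := by ring
  have e12 : i + 1 + 1 = i + 2 := by ring
  have hkey : ∃ x y z : Fin 3, x ≠ y ∧ y ≠ z ∧ x ≠ z ∧
      (∀ a b, R a b → (a = x ∧ b = y) ∨ (a = y ∧ b = z) ∨ (a = z ∧ b = x)) := by
    rcases hlam i with h1 | h1
    · have l1 : lam (i+1) = 1 := hr1 ▸ h1
      have l2 : lam (i+2) = 1 := hr2 ▸ l1
      have a1 : R (h i) (h (i+1)) := (hh i).1 h1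
      have a2 : R (h (i+1)) (h (i+2)) := by have := (hh (i+1)).1 l1; rwa [e12] at this
      have a3 : R (h (i+2)) (h (i+3)) := by have := (hh (i+2)).1 l2; rwa [e23] at this
      exact ⟨_, _, _, cycle_key hirr hanti a1 a2 a3⟩
    · have l1 : lam (i+1) = -1 := hr1 ▸ h1
      have l2 : lam (i+2) = -1 := hr2 ▸ l1
      have a1 : R (h (i+1)) (h i) := (hh i).2 h1
      have a2 : R (h (i+2)) (h (i+1)) := by have := (hh (i+1)).2 l1; rwa [e12] at this
      have a3 : R (h (i+3)) (h (i+2)) := by have := (hh (i+2)).2 l2; rwa [e23] at this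
      exact ⟨_, _, _, cycle_key hirr hanti a3 a2 a1⟩
  obtain ⟨x, y, z, d1, d2, d3, hkey⟩ := hkey
  set φ : Fin 3 → ZMod 3 := fun v => if v = x then 0 else if v = y then 1 else 2 with hφ
  have φx : φ x = 0 := by simp [hφ]
  have φy : φ y = 1 := by simp [hφ, d1.symm, (d1.symm : y ≠ x)]
  have φz : φ z = 2 := by simp [hφ, (d3.symm : z ≠ x), (d2.symm : z ≠ y)]
  have hstep : ∀ j : ZMod n, φ (h (j+1)) = φ (h j) + ((lam j : ℤ) : ZMod 3) := by
    intro j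
    rcases hlam j with h1 | h1
    · rcases hkey _ _ ((hh j).1 h1) with ⟨ea, eb⟩ | ⟨ea, eb⟩ | ⟨ea, eb⟩ <;>
        rw [ea, eb, h1] <;> simp only [φx, φy, φz] <;> push_cast <;> decide
    · rcases hkey _ _ ((hh j).2 h1) with ⟨ea, eb⟩ | ⟨ea, eb⟩ | ⟨ea, eb⟩ <;>
        rw [ea, eb, h1] <;> simp only [φx, φy, φz] <;> push_cast <;> decide
  have hterm : ∀ k : ℕ, φ (h (((k+1 : ℕ)) : ZMod n)) - φ (h ((k : ℕ) : ZMod n))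
      = ((lam ((k : ℕ) : ZMod n) : ℤ) : ZMod 3) := by
    intro k
    rw [show (((k+1:ℕ)) : ZMod n) = ((k : ℕ) : ZMod n) + 1 by push_cast; ring,
      hstep (((k:ℕ)) : ZMod n)]
    ring
  have hZ : ∑ k ∈ Finset.range n, ((lam ((k : ℕ) : ZMod n) : ℤ) : ZMod 3) = 0 := by
    rw [← Finset.sum_congr rfl (fun k _ => hterm k), Finset.sum_range_sub
      (f := fun k : ℕ => φ (h ((k : ℕ) : ZMod n)))]
    rw [show ((n : ℕ) : ZMod n) = ((0:ℕ) : ZMod n) by simp]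
    ring
  push_cast
  exact hZ

end forward3

section c5
lemma no_closed5 {R : Fin 4 → Fin 4 → Prop} (hirr : ∀ a, ¬ R a a)
    (hanti : ∀ a b, R a b → ¬ R b a) (h : ZMod 5 → Fin 4)
    (W : ∀ i : ZMod 5, R (h i) (h (i+1))) : False := by
  obtain ⟨i, j, hne, heq⟩ := Fintype.exists_ne_map_eq_of_card_lt h (by simp)
  have hd : j - i ≠ 0 := fun e => hne (by linear_combination -e)
  have hj : j = i + (j - i) := by ring
  have hcases := (by decide : ∀ d : ZMod 5, d ≠ 0 → d = 1 ∨ d = 2 ∨ d = 3 ∨ d = 4) _ hd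
  rcases hcases with hd1 | hd1 | hd1 | hd1
  · rw [hd1] at hj
    have a1 := W i
    rw [← hj, ← heq] at a1
    exact hirr _ a1
  · rw [hd1] at hj
    have a1 := W i
    have a2 := W (i+1)
    rw [show i + 1 + 1 = i + 2 by ring, ← hj, ← heq] at a2
    exact hanti _ _ a1 a2
  · rw [hd1] at hj
    have h5 : (5 : ZMod 5) = 0 := by decide
    have a1 := W j
    have a2 := W (j+1)
    rw [show j + 1 + 1 = i from by rw [hj]; linear_combination h5, heq] at a2
    exact hanti _ _ a1 a2
  · rw [hd1] at hj
    have h5 : (5 : ZMod 5) = 0 := by decide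
    have a1 := W j
    rw [show j + 1 = i from by rw [hj]; linear_combination h5, heq] at a1
    exact hirr _ a1

lemma c5_not_colorable4 {lam : ZMod 5 → ℤ} (hconst : ∀ i j, lam i = lam j)
    (hlam : ∀ i, lam i = 1 ∨ lam i = -1) : ¬ IsOrientedColorable 5 4 lam := by
  rintro ⟨R, hirr, hanti, h, hh⟩
  rcases hlam 0 with h1 | h1
  · have hall : ∀ i, lam i = 1 := fun i => (hconst i 0).trans h1
    exact no_closed5 hirr hanti h (fun i => (hh i).1 (hall i))
  · have hall : ∀ i, lam i = -1 := fun i => (hconst i 0).trans h1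
    exact no_closed5 (R := fun a b => R b a) (fun a hc => hirr a hc)
      (fun a b hab hba => hanti _ _ hba hab) h (fun i => (hh i).2 (hall i))
end c5

section four
variable {n : ℕ} {lam : ZMod n → ℤ}

def emb3 (c : ZMod 3) : Fin 4 := ⟨c.val, by have := ZMod.val_lt c; omega⟩

lemma emb3_inj : Function.Injective emb3 := by
  intro a b h
  have h2 := congrArg Fin.val h
  exact ZMod.val_injective 3 h2

lemma emb3_ne (c : ZMod 3) : emb3 c ≠ (⟨3, by omega⟩ : Fin 4) := by
  intro h
  have h1 := congrArg Fin.val h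
  have h2 := ZMod.val_lt c
  simp [emb3] at h1
  omega

lemma exists_switch (hn : 3 ≤ n) (hlam : ∀ i, lam i = 1 ∨ lam i = -1)
    (hnc : ¬ ∀ i j : ZMod n, lam i = lam j) :
    ∃ i : ZMod n, lam i = 1 ∧ lam (i+1) = -1 := by
  haveI : NeZero n := ⟨by omega⟩
  push_neg at hnc
  obtain ⟨i, j, hij⟩ := hnc
  have hpq : ∃ p q : ZMod n, lam p = 1 ∧ lam q = -1 := by
    rcases hlam i with h1 | h1 <;> rcases hlam j with h2 | h2
    · exact absurd (h1.trans h2.symm) hij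
    · exact ⟨i, j, h1, h2⟩
    · exact ⟨j, i, h2, h1⟩
    · exact absurd (h1.trans h2.symm) hij
  obtain ⟨p, q, hp, hq⟩ := hpq
  by_contra hno
  push_neg at hno
  have hall : ∀ m : ℕ, lam (p + (m : ZMod n)) = 1 := by
    intro m
    induction m with
    | zero => simpa using hp
    | succ k ih =>
        have hne := hno (p + (k : ZMod n)) ih
        rw [show (((k+1:ℕ)) : ZMod n) = ((k:ZMod n)) + 1 by push_cast; ring, ← add_assoc]
        rcases hlam (p + (k : ZMod n) + 1) with h | h
        · exact h
        · exact absurd h hne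
  have hv : (((q - p).val : ℕ) : ZMod n) = q - p :=
    (ZMod.natCast_val _).trans (ZMod.cast_id _ _)
  have := hall (q - p).val
  rw [hv, show p + (q - p) = q from by ring] at this
  rw [this] at hq
  norm_num at hq

def gp (lam : ZMod n → ℤ) (t j : ZMod n) : ZMod 3 :=
  ((∑ k ∈ Finset.range (j - t).val, lam (t + (k : ZMod n)) : ℤ) : ZMod 3)

lemma gp_step (hn : 3 ≤ n) (t j : ZMod n) (hj : j + 1 ≠ t) :
    gp lam t (j+1) = gp lam t j + ((lam j : ℤ) : ZMod 3) := by
  haveI : NeZero n := ⟨by omega⟩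
  set x := j - t with hx
  have hvx := ZMod.val_lt x
  have hxc : ((x.val : ℕ) : ZMod n) = x := (ZMod.natCast_val _).trans (ZMod.cast_id _ _)
  have hlt : x.val + 1 < n := by
    rcases Nat.lt_or_ge (x.val+1) n with h | h
    · exact h
    · exfalso
      apply hj
      have hxe : x = ((n - 1 : ℕ) : ZMod n) := by rw [← hxc]; congr 1; omega
      have h2 : ((n-1:ℕ) : ZMod n) = -1 := by
        rw [Nat.cast_sub (by omega : 1 ≤ n), ZMod.natCast_self, Nat.cast_one]; ring
      rw [h2] at hxe
      linear_combination hxe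
  have hval : (j + 1 - t).val = x.val + 1 := by
    have h2 : j + 1 - t = ((x.val + 1 : ℕ) : ZMod n) := by
      rw [Nat.cast_add, Nat.cast_one, hxc, hx]; ring
    rw [h2, ZMod.val_cast_of_lt hlt]
  rw [gp, gp, hval, Finset.sum_range_succ]
  rw [show t + ((x.val : ℕ) : ZMod n) = j from by rw [hxc, hx]; ring]
  push_cast
  ring

lemma nonconst_colorable4 (hn : 3 ≤ n) (hlam : ∀ i, lam i = 1 ∨ lam i = -1)
    (hnc : ¬ ∀ i j : ZMod n, lam i = lam j) :
    IsOrientedColorable n 4 lam := by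
  haveI : NeZero n := ⟨by omega⟩
  classical
  obtain ⟨i0, h1, h2⟩ := exists_switch hn hlam hnc
  set s := i0 + 1 with hs
  set t := s + 1 with ht
  set H : ZMod n → Fin 4 :=
    fun j => if j = s then ⟨3, by omega⟩ else emb3 (gp lam t j) with hH
  refine ⟨fun a b => (∃ c : ZMod 3, a = emb3 c ∧ b = emb3 (c+1)) ∨
    ((∃ c, a = emb3 c) ∧ b = ⟨3, by omega⟩), ?_, ?_, H, ?_⟩
  · rintro a (⟨c, rfl, hb⟩ | ⟨⟨c, rfl⟩, hb⟩)
    · have hb' := emb3_inj hb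
      exact absurd (by linear_combination -hb' : (1:ZMod 3) = 0) (by decide)
    · exact emb3_ne c hb
  · rintro a b (⟨c, rfl, rfl⟩ | ⟨⟨c, rfl⟩, rfl⟩) (⟨d, hd1, hd2⟩ | ⟨⟨d, hd1⟩, hd2⟩)
    · have e1 := emb3_inj hd1; have e2 := emb3_inj hd2
      exact absurd (by linear_combination e1 - e2 : (2:ZMod 3) = 0) (by decide)
    · exact emb3_ne _ hd2
    · exact emb3_ne _ hd1.symm
    · exact emb3_ne _ hd1.symm
  · intro i
    have hts : t ≠ s := by
      rw [ht]; intro e; exact myOneNe hn (by linear_combination e)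
    constructor
    · intro hli
      have his : i ≠ s := fun e => by rw [e, h2] at hli; norm_num at hli
      by_cases hi1 : i + 1 = s
      · right
        refine ⟨⟨gp lam t i, ?_⟩, ?_⟩
        · simp only [hH, if_neg his]
        · simp only [hH, if_pos hi1]
      · left
        refine ⟨gp lam t i, ?_, ?_⟩
        · simp only [hH, if_neg his]
        · simp only [hH, if_neg hi1]
          congr 1
          have hit : i + 1 ≠ t := by
            intro e
            exact his (by linear_combination e)
          have hstep := gp_step (lam := lam) hn t i hit
          rw [hli] at hstep
          push_cast at hstep
          exact hstep
    · intro hli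
      by_cases his : i = s
      · right
        have hi1 : i + 1 ≠ s := by
          rw [his]; intro e; exact myOneNe hn (by linear_combination e)
        refine ⟨⟨gp lam t (i+1), ?_⟩, ?_⟩
        · simp only [hH, if_neg hi1]
        · simp only [hH, if_pos his]
      · left
        have hi1 : i + 1 ≠ s := by
          intro e
          have : i = i0 := by rw [hs] at e; linear_combination e
          rw [this, h1] at hli; norm_num at hli
        refine ⟨gp lam t (i+1), ?_, ?_⟩
        · simp only [hH, if_neg hi1]
        · simp only [hH, if_neg his]
          congr 1
          have hit : i + 1 ≠ t := by
            intro e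
            exact his (by linear_combination e)
          have hstep := gp_step (lam := lam) hn t i hit
          rw [hli] at hstep
          push_cast at hstep
          linear_combination -hstep
end four

section walk
variable {n : ℕ} {lam : ZMod n → ℤ}

def R4 (x y : Fin 4) : Prop :=
  (x.val = 0 ∧ y.val = 1) ∨ (x.val = 1 ∧ y.val = 2) ∨ (x.val = 2 ∧ y.val = 0) ∨
  (x.val = 2 ∧ y.val = 3) ∨ (x.val = 3 ∧ y.val = 0)

lemma R4_irrefl : ∀ a, ¬ R4 a a := by
  intro a h
  rcases h with ⟨h1, h2⟩ | ⟨h1, h2⟩ | ⟨h1, h2⟩ | ⟨h1, h2⟩ | ⟨h1, h2⟩ <;> omega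

lemma R4_anti : ∀ a b, R4 a b → ¬ R4 b a := by
  intro a b h h'
  rcases h with ⟨h1, h2⟩ | ⟨h1, h2⟩ | ⟨h1, h2⟩ | ⟨h1, h2⟩ | ⟨h1, h2⟩ <;>
    rcases h' with ⟨h3, h4⟩ | ⟨h3, h4⟩ | ⟨h3, h4⟩ | ⟨h3, h4⟩ | ⟨h3, h4⟩ <;> omega

def fv (a : ℕ) (k : ℕ) : ℕ := if k < 3*a then k % 3 else (k - 3*a) % 4

def fw (a : ℕ) (k : ℕ) : Fin 4 := ⟨fv a k, by unfold fv; split_ifs <;> omega⟩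

lemma fw_val (a k : ℕ) : (fw a k).val = fv a k := rfl

lemma arcs_step (a b k : ℕ) (hk : k + 1 < 3*a + 4*b) : R4 (fw a k) (fw a (k+1)) := by
  unfold R4
  simp only [fw_val]
  unfold fv
  split_ifs with g1 g2 g2
  · have h3 : k % 3 = 0 ∨ k % 3 = 1 ∨ k % 3 = 2 := by omega
    rcases h3 with h3 | h3 | h3
    · exact Or.inl ⟨by omega, by omega⟩
    · exact Or.inr (Or.inl ⟨by omega, by omega⟩)
    · exact Or.inr (Or.inr (Or.inl ⟨by omega, by omega⟩))
  · exact Or.inr (Or.inr (Or.inl ⟨by omega, by omega⟩))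
  · omega
  · have h3 : (k - 3*a) % 4 = 0 ∨ (k - 3*a) % 4 = 1 ∨ (k - 3*a) % 4 = 2 ∨
        (k - 3*a) % 4 = 3 := by omega
    rcases h3 with h3 | h3 | h3 | h3
    · exact Or.inl ⟨by omega, by omega⟩
    · exact Or.inr (Or.inl ⟨by omega, by omega⟩)
    · exact Or.inr (Or.inr (Or.inr (Or.inl ⟨by omega, by omega⟩)))
    · exact Or.inr (Or.inr (Or.inr (Or.inr ⟨by omega, by omega⟩)))

lemma arcs_wrap (a b m : ℕ) (hm : m + 1 = 3*a + 4*b) (h3 : 3 ≤ 3*a + 4*b) :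
    R4 (fw a m) (fw a 0) := by
  unfold R4
  simp only [fw_val]
  unfold fv
  split_ifs with g1 g2 g2
  · exact Or.inr (Or.inr (Or.inl ⟨by omega, by omega⟩))
  · omega
  · exact Or.inr (Or.inr (Or.inr (Or.inr ⟨by omega, by omega⟩)))
  · exact Or.inr (Or.inr (Or.inr (Or.inr ⟨by omega, by omega⟩)))

lemma walk4 (hn : 3 ≤ n) (h5 : n ≠ 5) :
    ∃ h : ZMod n → Fin 4, ∀ i : ZMod n, R4 (h i) (h (i+1)) := by
  haveI : NeZero n := ⟨by omega⟩
  obtain ⟨a, b, hab⟩ : ∃ a b : ℕ, n = 3*a + 4*b := by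
    have h3 : n % 3 = 0 ∨ n % 3 = 1 ∨ n % 3 = 2 := by omega
    rcases h3 with h | h | h
    · exact ⟨n/3, 0, by omega⟩
    · exact ⟨(n-4)/3, 1, by omega⟩
    · exact ⟨(n-8)/3, 2, by omega⟩
  refine ⟨fun i => fw a i.val, ?_⟩
  intro i
  have hvn := ZMod.val_lt i
  have hi : ((i.val : ℕ) : ZMod n) = i := (ZMod.natCast_val _).trans (ZMod.cast_id _ _)
  by_cases hc : i.val + 1 < n
  · have hval : (i + 1).val = i.val + 1 := by
      have h2 : i + 1 = ((i.val + 1 : ℕ) : ZMod n) := by rw [Nat.cast_add, Nat.cast_one, hi]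
      rw [h2, ZMod.val_cast_of_lt hc]
    show R4 (fw a i.val) (fw a (i+1).val)
    rw [hval]
    exact arcs_step a b i.val (by omega)
  · have hval : (i + 1).val = 0 := by
      have h2 : i + 1 = ((i.val + 1 : ℕ) : ZMod n) := by rw [Nat.cast_add, Nat.cast_one, hi]
      rw [h2, show i.val + 1 = n from by omega, ZMod.natCast_self, ZMod.val_zero]
    show R4 (fw a i.val) (fw a (i+1).val)
    rw [hval]
    exact arcs_wrap a b i.val (by omega) (by omega)

lemma const_colorable4 (hn : 3 ≤ n) (h5 : n ≠ 5) (hlam : ∀ i, lam i = 1 ∨ lam i = -1)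
    (hconst : ∀ i j : ZMod n, lam i = lam j) :
    IsOrientedColorable n 4 lam := by
  haveI : NeZero n := ⟨by omega⟩
  obtain ⟨h, W⟩ := walk4 hn h5
  rcases hlam 0 with h1 | h1
  · have hall : ∀ i, lam i = 1 := fun i => (hconst i 0).trans h1
    refine ⟨R4, R4_irrefl, R4_anti, h, fun i => ⟨fun _ => W i, fun hc => ?_⟩⟩
    rw [hall i] at hc; norm_num at hc
  · have hall : ∀ i, lam i = -1 := fun i => (hconst i 0).trans h1
    refine ⟨fun x y => R4 y x, fun a hc => R4_irrefl a hc,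
      fun x y hxy hyx => R4_anti _ _ hyx hxy, h, fun i => ⟨fun hc => ?_, fun _ => W i⟩⟩
    rw [hall i] at hc; norm_num at hc

lemma colorable4_of_not_c5 (hn : 3 ≤ n) (hlam : ∀ i, lam i = 1 ∨ lam i = -1)
    (hnc5 : ¬ (n = 5 ∧ ∀ i j : ZMod n, lam i = lam j)) :
    IsOrientedColorable n 4 lam := by
  by_cases hconst : ∀ i j : ZMod n, lam i = lam j
  · have h5 : n ≠ 5 := fun e => hnc5 ⟨e, hconst⟩
    exact const_colorable4 hn h5 hlam hconst
  · exact nonconst_colorable4 hn hlam hconst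
end walk

lemma chi_eq_iff {n k : ℕ} {lam : ZMod n → ℤ} (hn : 3 ≤ n) (hk : 1 ≤ k) :
    orientedChromaticNumber n lam = k ↔
      IsOrientedColorable n k lam ∧ ¬ IsOrientedColorable n (k-1) lam := by
  have hne : Set.Nonempty {m | IsOrientedColorable n m lam} := ⟨n, colorable_self hn⟩
  constructor
  · intro h
    have hmem := Nat.sInf_mem hne
    rw [orientedChromaticNumber] at h
    refine ⟨h ▸ hmem, fun hc => ?_⟩
    have := Nat.sInf_le (s := {m | IsOrientedColorable n m lam}) hc
    omega
  · rintro ⟨h1, h2⟩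
    rw [orientedChromaticNumber]
    have hub := Nat.sInf_le (s := {m | IsOrientedColorable n m lam}) h1
    have hmem := Nat.sInf_mem hne
    by_contra hne2
    have hlt : sInf {m | IsOrientedColorable n m lam} ≤ k - 1 := by omega
    exact h2 (colorable_mono (by omega) hmem)

theorem stmt_16 (n : ℕ) (hn : 3 ≤ n) (lam : ZMod n → ℤ)
    (hlam : ∀ i, lam i = 1 ∨ lam i = -1) :
    (orientedChromaticNumber n lam = 2 ↔ (∀ i : ZMod n, lam (i + 1) = -lam i)) ∧
    (orientedChromaticNumber n lam = 3 ↔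
      (¬ (∀ i : ZMod n, lam (i + 1) = -lam i) ∧
        ((((∑ k ∈ Finset.range n, lam (k : ZMod n)) : ℤ) : ZMod 3) = 0 ∨
          ¬ ∃ i : ZMod n, lam i = lam (i + 1) ∧ lam (i + 1) = lam (i + 2)))) ∧
    (orientedChromaticNumber n lam = 5 ↔ (n = 5 ∧ ∀ i j : ZMod n, lam i = lam j)) ∧
    ((¬ (∀ i : ZMod n, lam (i + 1) = -lam i) ∧
      ¬ ((((∑ k ∈ Finset.range n, lam (k : ZMod n)) : ℤ) : ZMod 3) = 0 ∨
          ¬ ∃ i : ZMod n, lam i = lam (i + 1) ∧ lam (i + 1) = lam (i + 2)) ∧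
      ¬ (n = 5 ∧ ∀ i j : ZMod n, lam i = lam j)) →
      orientedChromaticNumber n lam = 4) := by
  refine ⟨?_, ?_, ?_, ?_⟩
  · constructor
    · intro h
      obtain ⟨hc2, -⟩ := (chi_eq_iff hn (by norm_num)).1 h
      exact colorable2_alternating hn hlam hc2
    · intro halt
      exact (chi_eq_iff hn (by norm_num)).2
        ⟨alternating_colorable2 halt hlam, not_colorable_one hn hlam⟩
  · constructor
    · intro h
      obtain ⟨hc3, hnc2⟩ := (chi_eq_iff hn (by norm_num)).1 h
      refine ⟨fun halt => hnc2 (alternating_colorable2 halt hlam), ?_⟩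
      by_cases hrun : ∃ i : ZMod n, lam i = lam (i+1) ∧ lam (i+1) = lam (i+2)
      · exact Or.inl (colorable3_run_sum hn hlam hc3 hrun)
      · exact Or.inr hrun
    · rintro ⟨hnalt, hor⟩
      refine (chi_eq_iff hn (by norm_num)).2
        ⟨?_, fun hc2 => hnalt (colorable2_alternating hn hlam hc2)⟩
      rcases hor with hsum | hnr
      · exact sum_colorable3 hn hsum
      · exact norun_colorable3 hnr
  · constructor
    · intro h
      obtain ⟨hc5, hnc4⟩ := (chi_eq_iff hn (by norm_num)).1 h
      by_contra hnc5
      exact hnc4 (colorable4_of_not_c5 hn hlam hnc5)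
    · rintro ⟨h5, hconst⟩
      subst h5
      exact (chi_eq_iff hn (by norm_num)).2
        ⟨colorable_self hn, c5_not_colorable4 hconst hlam⟩
  · rintro ⟨hnalt, hnor, hnc5⟩
    have hsum : ¬ (((∑ k ∈ Finset.range n, lam (k : ZMod n)) : ℤ) : ZMod 3) = 0 :=
      fun hs => hnor (Or.inl hs)
    have hrun : ∃ i : ZMod n, lam i = lam (i+1) ∧ lam (i+1) = lam (i+2) := by
      by_contra hc
      exact hnor (Or.inr hc)
    refine (chi_eq_iff hn (by norm_num)).2 ⟨colorable4_of_not_c5 hn hlam hnc5, ?_⟩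
    intro hc3
    exact hsum (colorable3_run_sum hn hlam hc3 hrun)
end

section
/- Every oriented cycle of length n ≥ 3 admits an oriented 5-coloring; i.e., the oriented chromatic number of any oriented cycle is at most 5. -/
open Finset

lemma key_ex (s : ℕ → Bool) :
    ∀ (m : ℕ) (c : ℤ),
      (∑ j ∈ Finset.range m, (if s j then (1:ℤ) else -2)) ≤ c →
      c ≤ (∑ j ∈ Finset.range m, (if s j then (1:ℤ) else -2)) + m →
      ∃ d : ℕ → ℤ,
        (∀ j < m, (s j = true → d j = 1 ∨ d j = 2) ∧ (s j = false → d j = -1 ∨ d j = -2)) ∧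
        (∑ j ∈ Finset.range m, d j) = c := by
  intro m
  induction m with
  | zero =>
    intro c h1 h2
    simp only [Finset.range_zero, Finset.sum_empty] at h1 h2 ⊢
    exact ⟨fun _ => 0, fun j hj => absurd hj (by omega), by omega⟩
  | succ m ih =>
    intro c h1 h2
    rw [Finset.sum_range_succ] at h1 h2
    set A := ∑ j ∈ Finset.range m, (if s j then (1:ℤ) else -2) with hA
    -- choose e
    have : ∃ e : ℤ, ((s m = true → e = 1 ∨ e = 2) ∧ (s m = false → e = -1 ∨ e = -2)) ∧
        A ≤ c - e ∧ c - e ≤ A + m := by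
      cases hsm : s m with
      | true =>
        simp only [hsm, if_true, Bool.false_eq_true, if_false] at h1 h2
        by_cases hc : c ≤ A + m + 1
        · exact ⟨1, ⟨fun _ => Or.inl rfl, by simp⟩, by push_cast at h1 h2 ⊢; omega, by push_cast at h1 h2 ⊢; omega⟩
        · exact ⟨2, ⟨fun _ => Or.inr rfl, by simp⟩, by push_cast at h1 h2 ⊢; omega, by push_cast at h1 h2 ⊢; omega⟩
      | false =>
        simp only [hsm, if_true, Bool.false_eq_true, if_false] at h1 h2
        by_cases hc : A - 1 ≤ c
        · exact ⟨-1, ⟨by simp, fun _ => Or.inl rfl⟩, by push_cast at h1 h2 ⊢; omega, by push_cast at h1 h2 ⊢; omega⟩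
        · exact ⟨-2, ⟨by simp, fun _ => Or.inr rfl⟩, by push_cast at h1 h2 ⊢; omega, by push_cast at h1 h2 ⊢; omega⟩
    obtain ⟨e, he, hle1, hle2⟩ := this
    obtain ⟨d, hd, hdsum⟩ := ih (c - e) hle1 hle2
    refine ⟨fun j => if j = m then e else d j, ?_, ?_⟩
    · intro j hj
      by_cases hjm : j = m
      · subst hjm; simpa using he
      · simpa [hjm] using hd j (by omega)
    · rw [Finset.sum_range_succ]
      have : ∑ j ∈ Finset.range m, (if j = m then e else d j) = ∑ j ∈ Finset.range m, d j := by
        apply Finset.sum_congr rfl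
        intro j hj
        simp [Finset.mem_range.mp hj |>.ne]
      simp [this, hdsum]

lemma mult5_in (a : ℤ) (n : ℕ) (hn : 3 ≤ n) (ha : n = 3 → a % 5 ≠ 1) :
    ∃ c : ℤ, a ≤ c ∧ c ≤ a + n ∧ 5 ∣ c := by
  refine ⟨5 * ((a + 4) / 5), ?_, ?_, ⟨_, rfl⟩⟩ <;>
  · have h1 := Int.mul_ediv_add_emod (a + 4) 5
    have h2 := Int.emod_nonneg (a + 4) (by norm_num : (5:ℤ) ≠ 0)
    have h3 := Int.emod_lt_of_pos (a + 4) (by norm_num : (0:ℤ) < 5)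
    rcases Nat.lt_or_ge n 4 with h | h
    · have hn3 : n = 3 := by omega
      have := ha hn3
      subst hn3
      omega
    · have : (4:ℤ) ≤ (n:ℤ) := by exact_mod_cast h
      omega

theorem stmt_17 (n : ℕ) (hn : 3 ≤ n) (lam : ZMod n → ℤ)
    (hlam : ∀ i, lam i = 1 ∨ lam i = -1) :
    IsOrientedColorable n 5 lam := by
  haveI : NeZero n := ⟨by omega⟩
  haveI : Fact (1 < n) := ⟨by omega⟩
  set s : ℕ → Bool := fun j => decide (lam ((j : ℕ) : ZMod n) = 1) with hs
  set A := ∑ j ∈ Finset.range n, (if s j then (1:ℤ) else -2) with hA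
  -- each summand is 1 or -2
  have hterm : ∀ j : ℕ, (if s j then (1:ℤ) else -2) = 1 ∨ (if s j then (1:ℤ) else -2) = -2 := by
    intro j; cases s j <;> simp
  have hAmod : n = 3 → A % 5 ≠ 1 := by
    intro h3
    rw [hA, h3]
    rw [Finset.sum_range_succ, Finset.sum_range_succ, Finset.sum_range_one]
    rcases hterm 0 with h0 | h0 <;> rcases hterm 1 with h1 | h1 <;> rcases hterm 2 with h2 | h2 <;>
      rw [h0, h1, h2] <;> decide
  obtain ⟨c, hc1, hc2, hc5⟩ := mult5_in A n hn hAmod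
  obtain ⟨d, hd, hdsum⟩ := key_ex s n c hc1 hc2
  -- partial sums in ZMod 5
  set g : ℕ → ZMod 5 := fun j => ((∑ k ∈ Finset.range j, d k : ℤ) : ZMod 5) with hg
  have hgsucc : ∀ j, g (j + 1) = g j + (d j : ZMod 5) := by
    intro j; rw [hg]; push_cast [Finset.sum_range_succ]; ring
  have hgn : g n = 0 := by
    rw [hg]; simp only [hdsum]
    exact (ZMod.intCast_zmod_eq_zero_iff_dvd c 5).mpr (by exact_mod_cast hc5)
  have hg0 : g 0 = 0 := by simp [hg]
  set conv : ZMod 5 → Fin 5 := fun x => ⟨x.val, x.val_lt⟩ with hconv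
  set R : Fin 5 → Fin 5 → Prop :=
    fun a b => b.val = (a.val + 1) % 5 ∨ b.val = (a.val + 2) % 5 with hR
  refine ⟨R, by decide, by decide, fun i => conv (g i.val), fun i => ?_⟩
  have hval : (i + 1).val = (i.val + 1) % n := by
    rw [ZMod.val_add, ZMod.val_one]
  have hwrap : g ((i.val + 1) % n) = g i.val + (d i.val : ZMod 5) := by
    rcases Nat.lt_or_ge (i.val + 1) n with h | h
    · rw [Nat.mod_eq_of_lt h, hgsucc]
    · have h1 : i.val + 1 = n := by have := i.val_lt; omega
      have h2 : g n = g i.val + (d i.val : ZMod 5) := by have h3 := hgsucc i.val; rwa [h1] at h3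
      rw [h1, Nat.mod_self, hg0, ← h2, hgn]
  have hsi : s i.val = decide (lam i = 1) := by
    have hcast : ((i.val : ℕ) : ZMod n) = i := by rw [ZMod.natCast_val, ZMod.cast_id]
    simp only [hs, hcast]
  have hdi := hd i.val i.val_lt
  have key1 : ∀ x : ZMod 5, R (conv x) (conv (x + 1)) := by decide
  have key2 : ∀ x : ZMod 5, R (conv x) (conv (x + 2)) := by decide
  have key3 : ∀ x : ZMod 5, R (conv (x + (-1))) (conv x) := by decide
  have key4 : ∀ x : ZMod 5, R (conv (x + (-2))) (conv x) := by decide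
  constructor
  · intro hl1
    have : s i.val = true := by rw [hsi]; simp [hl1]
    rcases hdi.1 this with h | h <;>
      · simp only [hval, hwrap, h]
        push_cast
        first | exact key1 _ | exact key2 _
  · intro hl1
    have : s i.val = false := by
      rw [hsi]; simp [hl1]
    rcases hdi.2 this with h | h <;>
      · simp only [hval, hwrap, h]
        push_cast
        first | exact key3 _ | exact key4 _
end
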